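/- Let A be a ring and B a commutative ring. Let g : A → B be a central ℤ-linear map, let n ≥ 1, and let a_1, …, a_n ∈ A. For each i ∈ [n−1], define (a_1^{(i)}, …, a_{n-1}^{(i)}) := (a_1, …, a_{i-1}, a_i·a_n, a_{i+1}, …, a_{n-1}). For any subset P = {p_1, …, p_r} of [n] with p_1, …, p_r distinct, set b_P := g_r(a_{p_1}, …, a_{p_r}), and for P ⊆ [n−1] set b_P^{(i)} := g_r(a_{p_1}^{(i)}, …, a_{p_r}^{(i)}). Then every subset P of [n−1] satisfies b_{P ∪ {n}} = b_P · g(a_n) − Σ_{i ∈ P} b_P^{(i)}. -/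

import Mathlib

/-!
Expand the Frobenius sum over the permutations of `P ∪ {n}` according to where `n` sits.
If `n` is a fixed point, deleting it leaves a permutation `τ` of `P` with the same sign and the
same cycles, plus the factor `g(aₙ)`: these terms add up to `b_P · g(aₙ)`. Otherwise `n`
directly follows some `i ∈ P` in its cycle; deleting it leaves a permutation `τ` of `P` of
opposite sign, and the cycle `(… i n τ(i) …)` contributes `g(⋯ aᵢ aₙ a_{τ(i)} ⋯)`, which is the
factor of the same cycle of `τ` for the family `a^{(i)}`: these terms add up to `-∑ᵢ b_P^{(i)}`.
Centrality makes each cycle factor independent of where the cycle is started, so the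
representatives at which `frob` starts its cycles do not matter.
-/

open scoped Classical

noncomputable section

/-- A `ℤ`-linear map `f : A → B` is *central* if `f (a * a') = f (a' * a)` for all `a, a'`. -/
def Central {A B : Type*} [Ring A] [CommRing B] (f : A →ₗ[ℤ] B) : Prop :=
  ∀ a a' : A, f (a * a') = f (a' * a)

/-- The product `a x * a (σ x) * a (σ² x) * ⋯` along the cycle of the permutation `σ`
containing `x`, starting at `x` (the cycle has length `Function.minimalPeriod σ x`). -/
def cycleProdAt {ι A : Type*} [Ring A] (a : ι → A) (σ : Equiv.Perm ι) (x : ι) : A :=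
  ((List.range (Function.minimalPeriod (⇑σ) x)).map (fun j => a ((σ ^ j) x))).prod

/-- The Frobenius map of a central `ℤ`-linear map `f : A → B`, applied to a finite family
`a : ι → A`:  `∑_{σ} sgn σ • ∏_{cycles c of σ} f (a_{i₁} a_{i₂} ⋯ a_{i_k})`, where each cycle
is represented by the product along it starting from its distinguished element (the one
minimizing a fixed enumeration of `ι`); when `f` is central this agrees with the classical
definition, which is independent of the starting points. -/
def frob {ι A B : Type*} [Fintype ι] [DecidableEq ι] [Ring A] [CommRing B]
    (f : A →ₗ[ℤ] B) (a : ι → A) : B :=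
  ∑ σ : Equiv.Perm ι, (Equiv.Perm.sign σ : ℤ) •
    ∏ x : ι,
      if ∀ j : ℕ, (Fintype.equivFin ι) x ≤ (Fintype.equivFin ι) ((σ ^ j) x)
      then f (cycleProdAt a σ x) else 1

/-- `f` is an `n`-homomorphism if it is central and its `(n+1)`-Frobenius map vanishes. -/
def IsNHom {A B : Type*} [Ring A] [CommRing B] (n : ℕ) (f : A →ₗ[ℤ] B) : Prop :=
  Central f ∧ ∀ a : Fin (n + 1) → A, frob f a = 0

/-- `π` is a set partition of the finite set `J`: its blocks are nonempty, pairwise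
disjoint, and their union is `J`. -/
def IsSetPartition {α : Type*} [DecidableEq α] (J : Finset α) (π : Finset (Finset α)) : Prop :=
  (∀ P ∈ π, P.Nonempty) ∧
  (∀ P ∈ π, ∀ Q ∈ π, P ≠ Q → Disjoint P Q) ∧
  π.biUnion id = J

/-- Delete the element `n` from the block of `π` containing it (removing the block if it
becomes empty). -/
def delPart (n : ℕ) (π : Finset (Finset ℕ)) : Finset (Finset ℕ) :=
  (π.image (fun P => P.erase n)).erase ∅

open Equiv Function

theorem Central.map_list_prod_rotate {A B : Type*} [Ring A] [CommRing B] {f : A →ₗ[ℤ] B}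
    (hf : Central f) (l : List A) (k : ℕ) : f (l.rotate k).prod = f l.prod := by
  rcases eq_or_ne l [] with rfl | hl
  · simp
  rw [← List.rotate_mod, List.rotate_eq_drop_append_take
    (Nat.mod_lt _ (List.length_pos_iff.2 hl)).le, List.prod_append, hf, ← List.prod_append,
    List.take_append_drop]

namespace Equiv.Perm

variable {ι : Type*} (σ : Perm ι) (x : ι)

theorem minimalPeriod_pos [Finite ι] : 0 < minimalPeriod σ x :=
  minimalPeriod_pos_of_mem_periodicPts (σ.injective.mem_periodicPts x)

theorem pow_minimalPeriod_apply : (σ ^ minimalPeriod σ x) x = x :=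
  iterate_minimalPeriod (f := σ)

theorem pow_mod_minimalPeriod_apply (k : ℕ) : (σ ^ (k % minimalPeriod σ x)) x = (σ ^ k) x :=
  iterate_mod_minimalPeriod_eq (f := σ)

theorem pow_apply_ne_self_of_lt_minimalPeriod {k : ℕ} (hk0 : k ≠ 0)
    (hk : k < minimalPeriod σ x) : (σ ^ k) x ≠ x :=
  fun h => not_isPeriodicPt_of_pos_of_lt_minimalPeriod hk0 hk h

end Equiv.Perm

theorem Function.Semiconj.perm_pow_apply {ι κ : Type*} {u : κ → ι} {τ : Perm κ}
    {σ : Perm ι} (h : Semiconj u τ σ) (j : ℕ) (z : κ) : (σ ^ j) (u z) = u ((τ ^ j) z) :=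
  ((h.iterate_right j).eq z).symm

section CycleProd

variable {ι κ A B : Type*} [Ring A] [CommRing B]

theorem cycleProdAt_congr {a₁ a₂ : ι → A} {σ : Perm ι} {x : ι}
    (h : ∀ j : ℕ, a₁ ((σ ^ j) x) = a₂ ((σ ^ j) x)) :
    cycleProdAt a₁ σ x = cycleProdAt a₂ σ x :=
  congrArg List.prod (List.map_congr_left fun j _ => h j)

theorem cycleProdAt_of_isFixedPt (a : ι → A) {σ : Perm ι} {x : ι} (h : σ x = x) :
    cycleProdAt a σ x = a x := by
  simp [cycleProdAt, minimalPeriod_eq_one_iff_isFixedPt.2 h]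

theorem cycleProdAt_comp (a : ι → A) {σ : Perm ι} {τ : Perm κ} {u : κ → ι}
    (hu : Injective u) {x : κ} (h : ∀ j : ℕ, (σ ^ j) (u x) = u ((τ ^ j) x)) :
    cycleProdAt a σ (u x) = cycleProdAt (a ∘ u) τ x := by
  have hper : minimalPeriod σ (u x) = minimalPeriod τ x :=
    minimalPeriod_eq_minimalPeriod_iff.2 fun n => by
      simp only [IsPeriodicPt, IsFixedPt, Perm.iterate_eq_pow, h, hu.eq_iff]
  unfold cycleProdAt
  rw [hper]
  exact congrArg List.prod (List.map_congr_left fun j _ => congrArg a (h j))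

theorem Central.map_cycleProdAt_of_sameCycle [Finite ι] {f : A →ₗ[ℤ] B} (hf : Central f)
    (a : ι → A) (σ : Perm ι) {x y : ι} (h : σ.SameCycle x y) :
    f (cycleProdAt a σ x) = f (cycleProdAt a σ y) := by
  obtain ⟨k, rfl⟩ := h.exists_nat_pow_eq
  set m := minimalPeriod σ x
  have hper : minimalPeriod σ ((σ ^ k) x) = m := by
    simpa [Perm.iterate_eq_pow] using minimalPeriod_apply_iterate (σ.injective.mem_periodicPts x) k
  have hrot : (List.range m).map (fun j => a ((σ ^ j) ((σ ^ k) x)))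
      = ((List.range m).map (fun j => a ((σ ^ j) x))).rotate k := by
    refine List.ext_getElem (by simp) fun i hi _ => ?_
    simp only [List.getElem_rotate, List.getElem_map, List.getElem_range, List.length_map,
      List.length_range, ← Perm.mul_apply, ← pow_add]
    exact congrArg a (σ.pow_mod_minimalPeriod_apply x _).symm
  unfold cycleProdAt
  rw [hper, hrot, hf.map_list_prod_rotate]

end CycleProd

namespace Equiv.Perm

variable {ι κ M : Type*}

def IsCycleTransversal (σ : Perm ι) (R : Finset ι) : Prop :=
  ∀ x : ι, ∃! y, y ∈ R ∧ σ.SameCycle x y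

theorem isCycleTransversal_filter_isLeast [Fintype ι] {α : Type*} [LinearOrder α]
    (σ : Perm ι) {ρ : ι → α} (hρ : Injective ρ) :
    σ.IsCycleTransversal {y | ∀ j : ℕ, ρ y ≤ ρ ((σ ^ j) y)} := by
  intro x
  obtain ⟨y, hy, hmin⟩ := ({z | σ.SameCycle x z} : Finset ι).exists_min_image ρ
    ⟨x, by simp [SameCycle.refl]⟩
  simp only [Finset.mem_filter, Finset.mem_univ, true_and] at hy hmin ⊢
  refine ⟨y, ⟨fun j => hmin _ (hy.trans (sameCycle_pow_right.2 (.refl _ _))), hy⟩, ?_⟩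
  rintro z ⟨hz, hxz⟩
  obtain ⟨k, hk⟩ := (hxz.symm.trans hy).exists_nat_pow_eq
  exact hρ (le_antisymm (hk ▸ hz k) (hmin z hxz))

theorem exists_isCycleTransversal [Finite ι] (σ : Perm ι) : ∃ R, σ.IsCycleTransversal R := by
  have := Fintype.ofFinite ι
  exact ⟨_, σ.isCycleTransversal_filter_isLeast (Fintype.equivFin ι).injective⟩

theorem IsCycleTransversal.prod_eq [CommMonoid M] {σ : Perm ι} {R R' : Finset ι}
    (hR : σ.IsCycleTransversal R) (hR' : σ.IsCycleTransversal R') {F : ι → M}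
    (hF : ∀ x y, σ.SameCycle x y → F x = F y) : ∏ y ∈ R, F y = ∏ y ∈ R', F y := by
  choose r hr using hR
  choose r' hr' using hR'
  refine Finset.prod_bij' (fun y _ => r' y) (fun y _ => r y) (fun y _ => (hr' y).1.1)
    (fun y _ => (hr y).1.1) (fun y hy => ((hr (r' y)).2 y ⟨hy, (hr' y).1.2.symm⟩).symm)
    (fun y hy => ((hr' (r y)).2 y ⟨hy, (hr y).1.2.symm⟩).symm) (fun y _ => hF _ _ (hr' y).1.2)

theorem sameCycle_apply_iff_of_semiconj [Finite ι] [Finite κ] {σ : Perm ι} {τ : Perm κ}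
    {u : κ → ι} (hu : Injective u) (h : Semiconj u τ σ) {z w : κ} :
    σ.SameCycle (u z) (u w) ↔ τ.SameCycle z w := by
  refine ⟨fun hzw => ?_, fun hzw => ?_⟩
  · obtain ⟨k, hk⟩ := hzw.exists_nat_pow_eq
    rw [h.perm_pow_apply] at hk
    exact ⟨k, by rw [zpow_natCast, hu hk]⟩
  · obtain ⟨k, rfl⟩ := hzw.exists_nat_pow_eq
    exact ⟨k, by rw [zpow_natCast, h.perm_pow_apply]⟩

theorem IsCycleTransversal.image [DecidableEq ι] {σ : Perm ι} {τ : Perm κ} {R : Finset κ}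
    (hR : τ.IsCycleTransversal R) {u : κ → ι} (hrange : ∀ x, ∃ z, σ.SameCycle x (u z))
    (hsc : ∀ z w, σ.SameCycle (u z) (u w) ↔ τ.SameCycle z w) :
    σ.IsCycleTransversal (R.image u) := by
  intro x
  obtain ⟨z, hxz⟩ := hrange x
  obtain ⟨y, ⟨hyR, hzy⟩, huniq⟩ := hR z
  refine ⟨u y, ⟨Finset.mem_image_of_mem u hyR, hxz.trans ((hsc z y).2 hzy)⟩, ?_⟩
  rintro _ ⟨hw, hxw⟩
  obtain ⟨y', hy', rfl⟩ := Finset.mem_image.1 hw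
  rw [huniq y' ⟨hy', (hsc z y').1 (hxz.symm.trans hxw)⟩]

end Equiv.Perm

section Frob

open Perm

variable {ι κ A B : Type*} [Ring A] [CommRing B]

def frobSummand [Fintype ι] (f : A →ₗ[ℤ] B) (a : ι → A) (σ : Perm ι) : B :=
  ∏ x : ι, if ∀ j : ℕ, (Fintype.equivFin ι) x ≤ (Fintype.equivFin ι) ((σ ^ j) x)
    then f (cycleProdAt a σ x) else 1

theorem frob_eq_sum_frobSummand [Fintype ι] [DecidableEq ι] (f : A →ₗ[ℤ] B) (a : ι → A) :
    frob f a = ∑ σ : Perm ι, (sign σ : ℤ) • frobSummand f a σ :=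
  rfl

variable {f : A →ₗ[ℤ] B}

theorem Central.frobSummand_eq_prod [Fintype ι] (hf : Central f) (a : ι → A) {σ : Perm ι}
    {R : Finset ι} (hR : σ.IsCycleTransversal R) :
    frobSummand f a σ = ∏ y ∈ R, f (cycleProdAt a σ y) := by
  rw [frobSummand, ← Finset.prod_filter]
  exact (σ.isCycleTransversal_filter_isLeast (Fintype.equivFin ι).injective).prod_eq hR
    fun x y h => hf.map_cycleProdAt_of_sameCycle a σ h

theorem Central.frob_comp_equiv [Fintype ι] [Fintype κ] [DecidableEq ι] [DecidableEq κ]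
    (hf : Central f) (e : κ ≃ ι) (a : ι → A) : frob f (a ∘ e) = frob f a := by
  rw [frob_eq_sum_frobSummand, frob_eq_sum_frobSummand]
  refine Fintype.sum_equiv e.permCongr _ _ fun τ => ?_
  have hsemi : Semiconj e τ (e.permCongr τ) := fun z => by simp [permCongr_apply]
  obtain ⟨R, hR⟩ := τ.exists_isCycleTransversal
  have hR' : (e.permCongr τ).IsCycleTransversal (R.image e) :=
    hR.image (fun x => ⟨e.symm x, by simp [SameCycle.refl]⟩)
      fun _ _ => sameCycle_apply_iff_of_semiconj e.injective hsemi
  rw [sign_permCongr, hf.frobSummand_eq_prod _ hR, hf.frobSummand_eq_prod _ hR',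
    Finset.prod_image e.injective.injOn]
  exact congrArg _ (Finset.prod_congr rfl fun y _ =>
    congrArg f (cycleProdAt_comp a e.injective (hsemi.perm_pow_apply · y)).symm)

end Frob

namespace Equiv.Perm

variable {κ : Type*} [DecidableEq κ]

theorem IsCycleTransversal.optionCongr [Finite κ] {τ : Perm κ} {R : Finset κ}
    (hR : τ.IsCycleTransversal R) :
    IsCycleTransversal (Equiv.optionCongr τ) (insert none (R.image some)) := by
  have hsc : ∀ {z w : κ},
      SameCycle (Equiv.optionCongr τ) (some z) (some w) ↔ τ.SameCycle z w :=
    sameCycle_apply_iff_of_semiconj (Option.some_injective κ) fun _ => rfl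
  rintro (_ | z)
  · exact ⟨none, ⟨Finset.mem_insert_self _ _, .refl _ _⟩,
      fun y hy => (hy.2.eq_of_left rfl).symm⟩
  · obtain ⟨y, ⟨hyR, hzy⟩, huniq⟩ := hR z
    refine ⟨some y,
      ⟨Finset.mem_insert_of_mem (Finset.mem_image_of_mem _ hyR), hsc.2 hzy⟩, ?_⟩
    rintro (_ | w) ⟨hw, hzw⟩
    · exact absurd (hzw.symm.eq_of_left rfl) (Option.some_ne_none z).symm
    · rw [huniq w ⟨by simpa using hw, hsc.1 hzw⟩]

/-- `τ` with `none` inserted into the cycle of `i`, right after `i`. -/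
def insertNoneAfter (τ : Perm κ) (i : κ) : Perm (Option κ) :=
  swap none (some (τ i)) * τ.optionCongr

variable (τ : Perm κ) (i : κ)

@[simp]
theorem insertNoneAfter_apply_none : τ.insertNoneAfter i none = some (τ i) := by
  simp [insertNoneAfter]

@[simp]
theorem insertNoneAfter_apply_some_self : τ.insertNoneAfter i (some i) = none := by
  simp [insertNoneAfter]

theorem insertNoneAfter_apply_some_of_ne {x : κ} (hx : x ≠ i) :
    τ.insertNoneAfter i (some x) = some (τ x) := by
  simp only [insertNoneAfter, mul_apply, optionCongr_apply, Option.map_some]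
  exact swap_apply_of_ne_of_ne (by simp) (by simp [τ.injective.ne hx])

theorem sign_insertNoneAfter [Fintype κ] : sign (τ.insertNoneAfter i) = -sign τ := by
  rw [insertNoneAfter, map_mul, sign_swap (by simp), optionCongr_sign, neg_one_mul]

theorem pow_insertNoneAfter_apply_some_of_not_sameCycle {x : κ} (hx : ¬τ.SameCycle x i)
    (j : ℕ) : (τ.insertNoneAfter i ^ j) (some x) = some ((τ ^ j) x) := by
  induction j with
  | zero => rfl
  | succ j ih =>
    have hne : (τ ^ j) x ≠ i := fun h => hx (h ▸ sameCycle_pow_right.2 (.refl _ _))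
    rw [pow_succ', mul_apply, ih, insertNoneAfter_apply_some_of_ne τ i hne, pow_succ',
      mul_apply]

theorem pow_succ_insertNoneAfter_apply_some_self [Finite κ] {k : ℕ} (hk1 : 1 ≤ k)
    (hk : k ≤ minimalPeriod τ i) :
    (τ.insertNoneAfter i ^ (k + 1)) (some i) = some ((τ ^ k) i) := by
  induction k, hk1 using Nat.le_induction with
  | base => simp [pow_succ', mul_apply]
  | succ k hk1 ih =>
    have hne := τ.pow_apply_ne_self_of_lt_minimalPeriod i (by omega) (by omega : k < _)
    rw [pow_succ', mul_apply, ih (by omega), insertNoneAfter_apply_some_of_ne τ i hne,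
      pow_succ', mul_apply]

theorem minimalPeriod_insertNoneAfter_some_self [Finite κ] :
    minimalPeriod (τ.insertNoneAfter i) (some i) = minimalPeriod τ i + 1 := by
  have hm := τ.minimalPeriod_pos i
  refine le_antisymm (IsPeriodicPt.minimalPeriod_le (Nat.succ_pos _) ?_) (not_lt.1 fun hlt => ?_)
  · rw [IsPeriodicPt, IsFixedPt, iterate_eq_pow,
      pow_succ_insertNoneAfter_apply_some_self τ i hm le_rfl, pow_minimalPeriod_apply]
  · have hfix := (τ.insertNoneAfter i).pow_minimalPeriod_apply (some i)
    obtain ⟨k, hk⟩ :=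
      Nat.exists_eq_add_one.2 ((τ.insertNoneAfter i).minimalPeriod_pos (some i))
    rw [hk] at hfix hlt
    rcases k with _ | k
    · simp at hfix
    · rw [pow_succ_insertNoneAfter_apply_some_self τ i (by omega) (by omega)] at hfix
      exact τ.pow_apply_ne_self_of_lt_minimalPeriod i (by omega) (by omega)
        (Option.some_injective _ hfix)

theorem sameCycle_insertNoneAfter_none_some_self :
    (τ.insertNoneAfter i).SameCycle none (some i) :=
  SameCycle.symm ⟨1, by simp⟩

theorem sameCycle_insertNoneAfter_some_self_some [Finite κ] {z : κ} (hz : τ.SameCycle i z) :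
    (τ.insertNoneAfter i).SameCycle (some i) (some z) := by
  obtain ⟨k, rfl⟩ := hz.exists_nat_pow_eq
  rw [← pow_mod_minimalPeriod_apply]
  rcases Nat.eq_zero_or_pos (k % minimalPeriod τ i) with h0 | hpos
  · rw [h0]
    rfl
  · rw [← pow_succ_insertNoneAfter_apply_some_self τ i hpos
      (Nat.mod_lt _ (τ.minimalPeriod_pos i)).le]
    exact sameCycle_pow_right.2 (.refl _ _)

theorem sameCycle_insertNoneAfter_some_iff_of_not_sameCycle [Finite κ] {x y : κ}
    (hx : ¬τ.SameCycle x i) :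
    (τ.insertNoneAfter i).SameCycle (some x) (some y) ↔ τ.SameCycle x y := by
  refine ⟨fun h => ?_, fun h => ?_⟩
  · obtain ⟨k, hk⟩ := h.exists_nat_pow_eq
    rw [pow_insertNoneAfter_apply_some_of_not_sameCycle τ i hx] at hk
    exact ⟨k, by rw [zpow_natCast, Option.some_injective _ hk]⟩
  · obtain ⟨k, rfl⟩ := h.exists_nat_pow_eq
    exact ⟨k, by rw [zpow_natCast, pow_insertNoneAfter_apply_some_of_not_sameCycle τ i hx]⟩

theorem sameCycle_insertNoneAfter_some_iff [Finite κ] {x y : κ} :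
    (τ.insertNoneAfter i).SameCycle (some x) (some y) ↔ τ.SameCycle x y := by
  by_cases hx : τ.SameCycle x i
  · by_cases hy : τ.SameCycle y i
    · exact iff_of_true ((sameCycle_insertNoneAfter_some_self_some τ i hx.symm).symm.trans
        (sameCycle_insertNoneAfter_some_self_some τ i hy.symm)) (hx.trans hy.symm)
    · rw [sameCycle_comm, sameCycle_insertNoneAfter_some_iff_of_not_sameCycle τ i hy,
        sameCycle_comm]
  · exact sameCycle_insertNoneAfter_some_iff_of_not_sameCycle τ i hx

theorem IsCycleTransversal.insertNoneAfter [Finite κ] {R : Finset κ}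
    (hR : τ.IsCycleTransversal R) : (τ.insertNoneAfter i).IsCycleTransversal (R.image some) :=
  hR.image (by
    rintro (_ | z)
    · exact ⟨i, sameCycle_insertNoneAfter_none_some_self τ i⟩
    · exact ⟨z, .refl _ _⟩) fun _ _ => sameCycle_insertNoneAfter_some_iff τ i

end Equiv.Perm

section FrobOption

open Perm

variable {κ A B : Type*} [DecidableEq κ] [Ring A] [CommRing B]

theorem cycleProdAt_insertNoneAfter_some_self [Finite κ] (b : Option κ → A) (τ : Perm κ)
    (i : κ) : cycleProdAt b (τ.insertNoneAfter i) (some i)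
      = cycleProdAt (update (b ∘ some) i (b (some i) * b none)) τ i := by
  obtain ⟨m, hm⟩ := Nat.exists_eq_add_one.2 (τ.minimalPeriod_pos i)
  have htail : ∀ j ∈ List.range m, b ((τ.insertNoneAfter i ^ (j + 1 + 1)) (some i))
      = update (b ∘ some) i (b (some i) * b none) ((τ ^ (j + 1)) i) := fun j hj => by
    rw [List.mem_range] at hj
    rw [pow_succ_insertNoneAfter_apply_some_self τ i (by omega) (by omega), update_of_ne
      (τ.pow_apply_ne_self_of_lt_minimalPeriod i (by omega) (by omega))]
    rfl
  unfold cycleProdAt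
  rw [minimalPeriod_insertNoneAfter_some_self, hm]
  simp only [List.prod_range_succ', Nat.succ_eq_add_one, pow_zero, zero_add, pow_one,
    one_apply, insertNoneAfter_apply_some_self, update_self, mul_assoc,
    List.map_congr_left htail]

variable {f : A →ₗ[ℤ] B}

theorem Central.frobSummand_optionCongr [Fintype κ] (hf : Central f) (b : Option κ → A)
    (τ : Perm κ) :
    frobSummand f b (Equiv.optionCongr τ) = frobSummand f (b ∘ some) τ * f (b none) := by
  obtain ⟨R, hR⟩ := τ.exists_isCycleTransversal
  have hsemi : Semiconj some τ (Equiv.optionCongr τ) := fun _ => rfl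
  rw [hf.frobSummand_eq_prod _ hR.optionCongr, Finset.prod_insert (by simp),
    Finset.prod_image (Option.some_injective κ).injOn, hf.frobSummand_eq_prod _ hR, mul_comm,
    cycleProdAt_of_isFixedPt b rfl]
  exact congrArg (· * _) (Finset.prod_congr rfl fun y _ => congrArg f
    (cycleProdAt_comp b (Option.some_injective κ) (hsemi.perm_pow_apply · y)))

theorem Central.frobSummand_insertNoneAfter [Fintype κ] (hf : Central f) (b : Option κ → A)
    (τ : Perm κ) (i : κ) :
    frobSummand f b (τ.insertNoneAfter i)
      = frobSummand f (update (b ∘ some) i (b (some i) * b none)) τ := by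
  obtain ⟨R, hR⟩ := τ.exists_isCycleTransversal
  rw [hf.frobSummand_eq_prod _ (hR.insertNoneAfter τ i),
    Finset.prod_image (Option.some_injective κ).injOn, hf.frobSummand_eq_prod _ hR]
  refine Finset.prod_congr rfl fun y _ => ?_
  by_cases hy : τ.SameCycle y i
  · rw [hf.map_cycleProdAt_of_sameCycle _ _ ((sameCycle_insertNoneAfter_some_iff τ i).2 hy),
      cycleProdAt_insertNoneAfter_some_self, hf.map_cycleProdAt_of_sameCycle _ _ hy.symm]
  · rw [cycleProdAt_comp b (Option.some_injective κ)
      (pow_insertNoneAfter_apply_some_of_not_sameCycle τ i hy)]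
    exact congrArg f (cycleProdAt_congr fun j => (update_of_ne
      (fun h : (τ ^ j) y = i => hy (h ▸ sameCycle_pow_right.2 (.refl _ _))) _ _).symm)

theorem Central.frob_option [Fintype κ] (hf : Central f) (b : Option κ → A) :
    frob f b = frob f (b ∘ some) * f (b none)
      - ∑ i, frob f (update (b ∘ some) i (b (some i) * b none)) := by
  have hnone : ∀ τ : Perm κ, decomposeOption.symm (none, τ) = Equiv.optionCongr τ :=
    fun τ => by ext1 x; simp
  calc frob f b
        = ∑ τ : Perm κ,
              (sign (Equiv.optionCongr τ) : ℤ) • frobSummand f b (Equiv.optionCongr τ)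
          + ∑ τ : Perm κ, ∑ i,
              (sign (τ.insertNoneAfter i) : ℤ) • frobSummand f b (τ.insertNoneAfter i) := by
        rw [frob_eq_sum_frobSummand, ← decomposeOption.symm.sum_comp, Fintype.sum_prod_type,
          Fintype.sum_option, Finset.sum_comm]
        simp only [hnone]
        exact congrArg _ (Finset.sum_congr rfl fun τ _ => (Equiv.sum_comp τ _).symm)
    _ = _ := by
        simp only [optionCongr_sign, sign_insertNoneAfter, hf.frobSummand_optionCongr,
          hf.frobSummand_insertNoneAfter, frob_eq_sum_frobSummand, Finset.sum_mul,
          smul_mul_assoc, Units.val_neg, neg_smul, Finset.sum_neg_distrib, sub_eq_add_neg]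
        rw [Finset.sum_comm]

end FrobOption

def Fin.optionEquivInsertLast {n : ℕ} (P : Finset (Fin n)) :
    Option P ≃ ↥(insert (Fin.last n) (P.image Fin.castSucc)) :=
  Equiv.ofBijective
    (fun o => o.elim ⟨Fin.last n, Finset.mem_insert_self _ _⟩
      fun x => ⟨x.1.castSucc, Finset.mem_insert_of_mem (Finset.mem_image_of_mem _ x.2)⟩)
    ⟨by
      rintro (_ | ⟨x, hx⟩) (_ | ⟨y, hy⟩) h <;>
        simp_all [Subtype.ext_iff, Fin.ext_iff] <;> omega,
    by
      rintro ⟨y, hy⟩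
      rcases Finset.mem_insert.1 hy with rfl | hy
      · exact ⟨none, rfl⟩
      · obtain ⟨x, hx, rfl⟩ := Finset.mem_image.1 hy
        exact ⟨some ⟨x, hx⟩, rfl⟩⟩

/-- `b_{P ∪ {n}} = b_P · g(aₙ) − ∑_{i ∈ P} b_P^{(i)}` (here with `n + 1` playing the role
of `n ≥ 1`, so that `P` is a subset of `Fin n`, i.e. of `[n−1]`). -/
theorem stmt11 {A B : Type*} [Ring A] [CommRing B] (g : A →ₗ[ℤ] B) (hg : Central g)
    (n : ℕ) (a : Fin (n + 1) → A) (P : Finset (Fin n)) :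
    frob g (fun x : {x // x ∈ insert (Fin.last n) (P.image Fin.castSucc)} => a x.1)
      = frob g (fun x : {x // x ∈ P} => a x.1.castSucc) * g (a (Fin.last n))
        - ∑ i ∈ P,
            frob g (fun x : {x // x ∈ P} =>
              Function.update (fun j : Fin n => a j.castSucc) i
                (a i.castSucc * a (Fin.last n)) x.1) := by
  rw [← hg.frob_comp_equiv (Fin.optionEquivInsertLast P), hg.frob_option,
    ← Finset.sum_coe_sort P]
  refine congrArg _ (Finset.sum_congr rfl fun i _ => congrArg (frob g) ?_)
  exact (update_comp_eq_of_injective (fun j : Fin n => a j.castSucc)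
    (Subtype.val_injective (p := (· ∈ P))) i _).symm
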